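/- arXiv:2207.06422 — 8 statements merged into one kernel-verified Lean document; each statement's English description precedes it below -/
import Mathlib

section
/- For all real numbers a, b > 0 and p ∈ (1,2], one has (a - b)(a^{p-1} - b^{p-1}) ≤ (a^{p/2} - b^{p/2})^2 ≤ (p^2/(4(p-1))) · (a - b)(a^{p-1} - b^{p-1}). -/
/-! The left inequality is AM–GM: writing `x = a ^ (p / 2)`, `y = b ^ (p / 2)`, so that
`a ^ (p - 1) = x ^ 2 / a`, the gap between the two sides is `(a y - b x) ^ 2 / (a b)`.
The right one is Cauchy–Schwarz on `[b, a]` for `s ↦ s ^ (p / 2 - 1)`, whose integral is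
`(a ^ (p / 2) - b ^ (p / 2)) / (p / 2)` and whose square integrates to
`(a ^ (p - 1) - b ^ (p - 1)) / (p - 1)`. -/

open intervalIntegral

theorem sq_intervalIntegral_le_mul_intervalIntegral_sq {f : ℝ → ℝ} {a b : ℝ} (hab : a ≤ b)
    (hf : ContinuousOn f (Set.uIcc a b)) :
    (∫ x in a..b, f x) ^ 2 ≤ (b - a) * ∫ x in a..b, f x ^ 2 := by
  have hf1 := hf.intervalIntegrable (μ := MeasureTheory.volume)
  have hf2 : IntervalIntegrable (fun x => f x ^ 2) MeasureTheory.volume a b :=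
    (hf.pow 2).intervalIntegrable
  have hquad : ∀ t : ℝ, 0 ≤ (b - a) * (t * t) + (-2 * ∫ x in a..b, f x) * t +
      ∫ x in a..b, f x ^ 2 := by
    intro t
    have hexpand : ∫ x in a..b, (f x - t) ^ 2 =
        (b - a) * (t * t) + (-2 * ∫ x in a..b, f x) * t + ∫ x in a..b, f x ^ 2 := by
      simp_rw [sub_sq]
      rw [integral_add (hf2.sub ((hf1.const_mul 2).mul_const t)) intervalIntegrable_const,
        integral_sub hf2 ((hf1.const_mul 2).mul_const t), integral_mul_const, integral_const_mul,
        integral_const, smul_eq_mul]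
      ring
    rw [← hexpand]
    exact integral_nonneg hab fun x _ => sq_nonneg _
  have hdisc := discrim_le_zero hquad
  rw [discrim] at hdisc
  linarith

theorem Real.intervalIntegral_rpow_of_pos {a b r : ℝ} (ha : 0 < a) (hb : 0 < b) (hr : r ≠ -1) :
    ∫ x in a..b, x ^ r = (b ^ (r + 1) - a ^ (r + 1)) / (r + 1) :=
  integral_rpow (Or.inr ⟨hr, Set.notMem_uIcc_of_lt ha hb⟩)

theorem sub_mul_div_sub_div_le_sq {a b x y : ℝ} (ha : 0 < a) (hb : 0 < b) :
    (a - b) * (x ^ 2 / a - y ^ 2 / b) ≤ (x - y) ^ 2 := by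
  have hdiff : (x - y) ^ 2 - (a - b) * (x ^ 2 / a - y ^ 2 / b) =
      (a * y - b * x) ^ 2 / (a * b) := by
    field_simp
    ring
  have : 0 ≤ (a * y - b * x) ^ 2 / (a * b) := by positivity
  linarith

theorem Real.sub_mul_rpow_sub_one_le_sq_rpow_half_sub {a b : ℝ} (ha : 0 < a) (hb : 0 < b)
    (p : ℝ) : (a - b) * (a ^ (p - 1) - b ^ (p - 1)) ≤ (a ^ (p / 2) - b ^ (p / 2)) ^ 2 := by
  have hsq : ∀ {x : ℝ}, 0 < x → x ^ (p - 1) = (x ^ (p / 2)) ^ 2 / x := fun hx => by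
    rw [Real.rpow_sub_one hx.ne', ← Real.rpow_mul_natCast hx.le]
    norm_num
  rw [hsq ha, hsq hb]
  exact sub_mul_div_sub_div_le_sq ha hb

theorem Real.sq_rpow_half_sub_le_mul_sub_mul_rpow_sub_one {a b p : ℝ} (ha : 0 < a) (hb : 0 < b)
    (hp0 : p ≠ 0) (hp1 : p ≠ 1) :
    (a ^ (p / 2) - b ^ (p / 2)) ^ 2 ≤
      p ^ 2 / (4 * (p - 1)) * ((a - b) * (a ^ (p - 1) - b ^ (p - 1))) := by
  wlog hba : b ≤ a generalizing a b
  · convert this hb ha (le_of_not_ge hba) using 1 <;> ring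
  have hpos : ∀ x ∈ Set.uIcc b a, 0 < x := fun x hx =>
    hb.trans_le (Set.uIcc_of_le hba ▸ hx).1
  have hcs := sq_intervalIntegral_le_mul_intervalIntegral_sq (f := fun x => x ^ (p / 2 - 1)) hba
    fun x hx => (Real.continuousAt_rpow_const x _ (Or.inl (hpos x hx).ne')).continuousWithinAt
  have hsq : ∫ x in b..a, (x ^ (p / 2 - 1)) ^ 2 = ∫ x in b..a, x ^ (p - 2) := by
    refine integral_congr fun x hx => ?_
    rw [← Real.rpow_mul_natCast (hpos x hx).le]
    ring_nf
  have hr₀ : p / 2 - 1 ≠ -1 := by contrapose! hp0; linarith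
  have hr₁ : p - 2 ≠ -1 := by contrapose! hp1; linarith
  rw [hsq, Real.intervalIntegral_rpow_of_pos hb ha hr₀,
    Real.intervalIntegral_rpow_of_pos hb ha hr₁, show p / 2 - 1 + 1 = p / 2 by ring,
    show p - 2 + 1 = p - 1 by ring] at hcs
  have hp_sub_one : p - 1 ≠ 0 := sub_ne_zero.2 hp1
  calc (a ^ (p / 2) - b ^ (p / 2)) ^ 2
      = (p / 2) ^ 2 * ((a ^ (p / 2) - b ^ (p / 2)) / (p / 2)) ^ 2 := by
        field_simp
    _ ≤ (p / 2) ^ 2 * ((a - b) * ((a ^ (p - 1) - b ^ (p - 1)) / (p - 1))) := by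
        gcongr
    _ = _ := by
        field_simp
        ring

theorem stmt0_general (a b p : ℝ) (ha : 0 < a) (hb : 0 < b) (hp1 : 1 < p) :
    (a - b) * (a ^ (p - 1) - b ^ (p - 1)) ≤ (a ^ (p / 2) - b ^ (p / 2)) ^ 2 ∧
    (a ^ (p / 2) - b ^ (p / 2)) ^ 2 ≤
      p ^ 2 / (4 * (p - 1)) * ((a - b) * (a ^ (p - 1) - b ^ (p - 1))) :=
  ⟨Real.sub_mul_rpow_sub_one_le_sq_rpow_half_sub ha hb p,
    Real.sq_rpow_half_sub_le_mul_sub_mul_rpow_sub_one ha hb (by linarith) hp1.ne'⟩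

theorem stmt0 (a b p : ℝ) (ha : 0 < a) (hb : 0 < b) (hp1 : 1 < p) (hp2 : p ≤ 2) :
    (a - b) * (a ^ (p - 1) - b ^ (p - 1)) ≤ (a ^ (p / 2) - b ^ (p / 2)) ^ 2 ∧
    (a ^ (p / 2) - b ^ (p / 2)) ^ 2 ≤
      p ^ 2 / (4 * (p - 1)) * ((a - b) * (a ^ (p - 1) - b ^ (p - 1))) :=
  stmt0_general a b p ha hb hp1
end

section
/- For every p ∈ (1,2) and all x, y > 0 with x ≠ y, the divided difference (x^{p-1} - y^{p-1})/((p-1)(x - y)) equals (sin((p-1)π)/π) · ∫₀^∞ ∫₀^∞ s^{p-2} / ((t + s + x)(t + s + y)) dt ds. -/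
/-!
With `a = p - 1`, the `t`-integral is elementary:
`∫₀^∞ dt / ((t + s + x)(t + s + y)) = (log (s + x) - log (s + y)) / (x - y)`.
Writing the logarithmic difference as `∫_y^x dv / (s + v)` and exchanging the order of
integration, the `s`-integral becomes the Mellin transform
`∫₀^∞ s^(a-1) / (s + v) ds = π / sin (π a) · v^(a-1)`, which follows from
`1 / (s + v) = ∫₀^∞ e^(-(s + v) t) dt`, Fubini, and `Γ(a) Γ(1 - a) = π / sin (π a)`.
Integrating `v^(a-1)` over `[y, x]` leaves `(x^a - y^a) / a`.
-/

open MeasureTheory Set Real Filter Topology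

theorem integral_exp_neg_mul_Ioi {c : ℝ} (hc : 0 < c) :
    ∫ t in Ioi (0 : ℝ), exp (-c * t) = c⁻¹ := by
  rw [integral_exp_mul_Ioi (neg_neg_of_pos hc), mul_zero, exp_zero, neg_div_neg_eq, one_div]

section RpowDivAdd

variable {a u : ℝ}

theorem integral_rpow_mul_exp_neg_add_mul_Ioi (ha : 0 < a) {t : ℝ} (ht : 0 < t) :
    ∫ s in Ioi (0 : ℝ), s ^ (a - 1) * exp (-(s + u) * t) =
      Gamma a * (t ^ (-a) * exp (-(u * t))) := by
  have hsplit : ∀ s : ℝ, s ^ (a - 1) * exp (-(s + u) * t) =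
      s ^ (a - 1) * exp (-(t * s)) * exp (-(u * t)) := fun s => by
    rw [mul_assoc, ← exp_add]; ring_nf
  simp_rw [hsplit]
  rw [integral_mul_const, integral_rpow_mul_exp_neg_mul_Ioi ha ht, one_div, inv_rpow ht.le,
    ← rpow_neg ht.le]
  ring

theorem integrable_rpow_mul_exp_neg_add_mul (ha0 : 0 < a) (ha1 : a < 1) (hu : 0 < u) :
    Integrable (Function.uncurry fun s t : ℝ => s ^ (a - 1) * exp (-(s + u) * t))
      ((volume.restrict (Ioi 0)).prod (volume.restrict (Ioi 0))) := by
  refine (integrable_prod_iff' (by fun_prop : Measurable _).aestronglyMeasurable).2 ⟨?_, ?_⟩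
  · filter_upwards [ae_restrict_mem measurableSet_Ioi] with t (ht : 0 < t)
    refine IntegrableOn.congr_fun ((integrableOn_rpow_mul_exp_neg_mul_rpow (s := a - 1)
      (by linarith) one_pos ht).mul_const (exp (-(u * t)))) (fun s _ => ?_) measurableSet_Ioi
    simp only [Function.uncurry_apply_pair, rpow_one, mul_assoc, ← exp_add]
    ring_nf
  · refine (((integrableOn_rpow_mul_exp_neg_mul_rpow (s := -a) (by linarith) one_pos hu).const_mul
      (Gamma a)).congr ?_)
    filter_upwards [ae_restrict_mem measurableSet_Ioi] with t (ht : 0 < t)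
    rw [rpow_one, neg_mul, ← integral_rpow_mul_exp_neg_add_mul_Ioi ha0 ht]
    refine setIntegral_congr_fun measurableSet_Ioi fun s (hs : 0 < s) => ?_
    simp only [Function.uncurry_apply_pair, neg_mul]
    exact (norm_of_nonneg (by positivity)).symm

theorem integrableOn_rpow_div_add (ha0 : 0 < a) (ha1 : a < 1) (hu : 0 < u) :
    IntegrableOn (fun s : ℝ => s ^ (a - 1) / (s + u)) (Ioi 0) := by
  refine (integrable_rpow_mul_exp_neg_add_mul ha0 ha1 hu).integral_prod_left.congr ?_
  filter_upwards [ae_restrict_mem measurableSet_Ioi] with s (hs : 0 < s)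
  simp only [Function.uncurry_apply_pair]
  rw [integral_const_mul, integral_exp_neg_mul_Ioi (by linarith), div_eq_mul_inv]

theorem integral_rpow_div_add (ha0 : 0 < a) (ha1 : a < 1) (hu : 0 < u) :
    ∫ s in Ioi (0 : ℝ), s ^ (a - 1) / (s + u) = π / sin (π * a) * u ^ (a - 1) :=
  calc ∫ s in Ioi (0 : ℝ), s ^ (a - 1) / (s + u)
      = ∫ s in Ioi (0 : ℝ), ∫ t in Ioi (0 : ℝ), s ^ (a - 1) * exp (-(s + u) * t) :=
        setIntegral_congr_fun measurableSet_Ioi fun s (hs : 0 < s) => by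
          rw [integral_const_mul, integral_exp_neg_mul_Ioi (by linarith), div_eq_mul_inv]
    _ = ∫ t in Ioi (0 : ℝ), ∫ s in Ioi (0 : ℝ), s ^ (a - 1) * exp (-(s + u) * t) :=
        integral_integral_swap (integrable_rpow_mul_exp_neg_add_mul ha0 ha1 hu)
    _ = ∫ t in Ioi (0 : ℝ), Gamma a * (t ^ (1 - a - 1) * exp (-(u * t))) :=
        setIntegral_congr_fun measurableSet_Ioi fun t (ht : 0 < t) => by
          rw [integral_rpow_mul_exp_neg_add_mul_Ioi ha0 ht, sub_sub_cancel_left]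
    _ = Gamma a * ((1 / u) ^ (1 - a) * Gamma (1 - a)) := by
        rw [integral_const_mul, integral_rpow_mul_exp_neg_mul_Ioi (by linarith) hu]
    _ = π / sin (π * a) * u ^ (a - 1) := by
        rw [← Gamma_mul_Gamma_one_sub, one_div, inv_rpow hu.le, ← rpow_neg hu.le, neg_sub]
        ring

end RpowDivAdd

theorem integral_Ioi_inv_add_mul_add {A B : ℝ} (hA : 0 < A) (hB : 0 < B) (hAB : A ≠ B) :
    ∫ t in Ioi (0 : ℝ), ((t + A) * (t + B))⁻¹ = (log A - log B) / (A - B) := by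
  have hAB' : A - B ≠ 0 := sub_ne_zero.2 hAB
  let F : ℝ → ℝ := fun t => (log (t + B) - log (t + A)) / (A - B)
  have hF : ∀ t ∈ Ici (0 : ℝ), HasDerivAt F ((t + A) * (t + B))⁻¹ t := by
    intro t (ht : 0 ≤ t)
    have hlog (c : ℝ) (hc : 0 < c) : HasDerivAt (fun t => log (t + c)) (t + c)⁻¹ t := by
      simpa using ((hasDerivAt_id' t).add_const c).log (by linarith)
    refine (((hlog B hB).sub (hlog A hA)).div_const (A - B)).congr_deriv ?_
    have : t + A ≠ 0 := by positivity
    have : t + B ≠ 0 := by positivity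
    field_simp
    ring
  have hF_lim : Tendsto F atTop (𝓝 0) := by
    have h := ((tendsto_log_comp_add_sub_log B).sub (tendsto_log_comp_add_sub_log A)).div_const
      (A - B)
    simpa only [sub_self, zero_div, sub_sub_sub_cancel_right] using h
  rw [integral_Ioi_of_hasDerivAt_of_nonneg' hF (fun t (ht : 0 < t) => by positivity) hF_lim]
  simp only [F, zero_add]
  field_simp
  ring

theorem integral_inv_add_eq_log_sub_log {s x y : ℝ} (hx : 0 < s + x) (hy : 0 < s + y) :
    ∫ u in y..x, (s + u)⁻¹ = log (s + x) - log (s + y) := by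
  rw [intervalIntegral.integral_comp_add_left (fun u => u⁻¹), integral_inv_of_pos hy hx,
    log_div hx.ne' hy.ne']

theorem integral_rpow_mul_log_add_sub_log_add {a x y : ℝ} (ha0 : 0 < a) (ha1 : a < 1)
    (hx : 0 < x) (hy : 0 < y) :
    ∫ s in Ioi (0 : ℝ), s ^ (a - 1) * (log (s + x) - log (s + y)) =
      π / sin (π * a) * ((x ^ a - y ^ a) / a) := by
  wlog hyx : y ≤ x generalizing x y
  · have h := this hy hx (le_of_not_ge hyx)
    have hneg : ∀ s : ℝ, s ^ (a - 1) * (log (s + x) - log (s + y)) =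
        -(s ^ (a - 1) * (log (s + y) - log (s + x))) := fun s => by ring
    simp_rw [hneg]
    rw [integral_neg, h]
    ring
  let g : ℝ → ℝ → ℝ := fun s v => s ^ (a - 1) / (s + v)
  have hg_int : Integrable (Function.uncurry g)
      ((volume.restrict (Ioi 0)).prod (volume.restrict (Ioc y x))) := by
    refine (integrable_prod_iff' (by fun_prop : Measurable _).aestronglyMeasurable).2 ⟨?_, ?_⟩
    · filter_upwards [ae_restrict_mem measurableSet_Ioc] with v hv
      exact integrableOn_rpow_div_add ha0 ha1 (hy.trans hv.1)
    · have hrpow : IntegrableOn (fun v : ℝ => v ^ (a - 1)) (Ioc y x) :=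
        (intervalIntegrable_iff_integrableOn_Ioc_of_le hyx).1
          (intervalIntegral.intervalIntegrable_rpow' (by linarith))
      refine (hrpow.const_mul (π / sin (π * a))).congr ?_
      filter_upwards [ae_restrict_mem measurableSet_Ioc] with v hv
      have hv0 : 0 < v := hy.trans hv.1
      rw [← integral_rpow_div_add ha0 ha1 hv0]
      refine setIntegral_congr_fun measurableSet_Ioi fun s (hs : 0 < s) => ?_
      exact (norm_of_nonneg (show 0 ≤ s ^ (a - 1) / (s + v) by positivity)).symm
  calc ∫ s in Ioi (0 : ℝ), s ^ (a - 1) * (log (s + x) - log (s + y))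
      = ∫ s in Ioi (0 : ℝ), ∫ v in Ioc y x, g s v :=
        setIntegral_congr_fun measurableSet_Ioi fun s (hs : 0 < s) => by
          rw [← integral_inv_add_eq_log_sub_log (by linarith) (by linarith),
            intervalIntegral.integral_of_le hyx, ← integral_const_mul]
          rfl
    _ = ∫ v in Ioc y x, ∫ s in Ioi (0 : ℝ), g s v := integral_integral_swap hg_int
    _ = ∫ v in Ioc y x, π / sin (π * a) * v ^ (a - 1) :=
        setIntegral_congr_fun measurableSet_Ioc fun v hv =>
          integral_rpow_div_add ha0 ha1 (hy.trans hv.1)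
    _ = π / sin (π * a) * ((x ^ a - y ^ a) / a) := by
        rw [integral_const_mul, ← intervalIntegral.integral_of_le hyx,
          integral_rpow (Or.inl (by linarith)), sub_add_cancel]

theorem stmt1 (p x y : ℝ) (hp1 : 1 < p) (hp2 : p < 2) (hx : 0 < x) (hy : 0 < y)
    (hxy : x ≠ y) :
    (x ^ (p - 1) - y ^ (p - 1)) / ((p - 1) * (x - y)) =
      Real.sin ((p - 1) * Real.pi) / Real.pi *
        ∫ s in Set.Ioi (0 : ℝ), ∫ t in Set.Ioi (0 : ℝ),
          s ^ (p - 2) / ((t + s + x) * (t + s + y)) := by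
  have hinner : ∀ s ∈ Ioi (0 : ℝ),
      ∫ t in Ioi (0 : ℝ), s ^ (p - 2) / ((t + s + x) * (t + s + y)) =
        s ^ (p - 1 - 1) * (log (s + x) - log (s + y)) / (x - y) := fun s (hs : 0 < s) => by
    simp_rw [div_eq_mul_inv, add_assoc]
    rw [integral_const_mul, integral_Ioi_inv_add_mul_add (by linarith) (by linarith)
      (by simpa using hxy), add_sub_add_left_eq_sub, show p - 1 - 1 = p - 2 by ring]
    ring
  have hsin : sin ((p - 1) * π) ≠ 0 :=
    (sin_pos_of_pos_of_lt_pi (by nlinarith [pi_pos]) (by nlinarith [pi_pos])).ne'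
  rw [setIntegral_congr_fun measurableSet_Ioi hinner, integral_div,
    integral_rpow_mul_log_add_sub_log_add (by linarith) (by linarith) hx hy, mul_comm π (p - 1)]
  field_simp
end

section
/- Let κ : (0,∞) → (0,∞) satisfy κ(x) = ∫₀¹ (1/(x+s) + 1/(sx+1)) · ((1+s)/2) dm(s) for some probability measure m on [0,1]. Then for all x > 0, 2/(1+x) ≤ κ(x) ≤ (1+x)/(2x). -/
open MeasureTheory

theorem stmt4 (κ : ℝ → ℝ) (m : Measure ℝ) [IsProbabilityMeasure m]
    (hsupp : m (Set.Icc (0 : ℝ) 1)ᶜ = 0)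
    (hκ : ∀ x > (0 : ℝ), κ x = ∫ s, (1 / (x + s) + 1 / (s * x + 1)) * ((1 + s) / 2) ∂m)
    (x : ℝ) (hx : 0 < x) :
    2 / (1 + x) ≤ κ x ∧ κ x ≤ (1 + x) / (2 * x) := by
  set f : ℝ → ℝ := fun s => (1 / (x + s) + 1 / (s * x + 1)) * ((1 + s) / 2) with hf
  have hae : ∀ᵐ s ∂m, s ∈ Set.Icc (0 : ℝ) 1 := by
    rw [ae_iff]
    exact hsupp
  -- pointwise bounds
  have hbd : ∀ s ∈ Set.Icc (0 : ℝ) 1, 2 / (1 + x) ≤ f s ∧ f s ≤ (1 + x) / (2 * x) := by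
    intro s hs
    obtain ⟨hs0, hs1⟩ := hs
    have h1 : (0 : ℝ) < x + s := by linarith
    have h2 : (0 : ℝ) < s * x + 1 := by nlinarith
    have key : f s = (x + 1) * (1 + s) ^ 2 / (2 * ((x + s) * (s * x + 1))) := by
      simp only [hf]; field_simp; ring
    constructor
    · rw [key, div_le_div_iff₀ (by positivity) (by positivity)]
      nlinarith [sq_nonneg (x + s - (s * x + 1))]
    · rw [key, div_le_div_iff₀ (by positivity) (by positivity)]
      nlinarith [mul_nonneg hs0 (sq_nonneg (x - 1))]
  have hlo : ∀ᵐ s ∂m, 2 / (1 + x) ≤ f s := hae.mono fun s hs => (hbd s hs).1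
  have hhi : ∀ᵐ s ∂m, f s ≤ (1 + x) / (2 * x) := hae.mono fun s hs => (hbd s hs).2
  have hmeas : AEStronglyMeasurable f m := by
    refine Measurable.aestronglyMeasurable ?_
    exact ((measurable_const.div (measurable_const.add measurable_id)).add
      (measurable_const.div ((measurable_id.mul_const x).add measurable_const))).mul
      ((measurable_const.add measurable_id).div_const 2)
  have hint : Integrable f m := by
    apply Integrable.mono' (integrable_const ((1 + x) / (2 * x))) hmeas
    filter_upwards [hlo, hhi] with s h1 h2
    rw [Real.norm_eq_abs, abs_of_nonneg (le_trans (by positivity) h1)]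
    exact h2
  have hconst : ∀ c : ℝ, ∫ _, c ∂m = c := by
    intro c; simp
  rw [hκ x hx]
  constructor
  · calc 2 / (1 + x) = ∫ _, 2 / (1 + x) ∂m := (hconst _).symm
      _ ≤ ∫ s, f s ∂m := integral_mono_ae (integrable_const _) hint hlo
  · calc (∫ s, f s ∂m) ≤ ∫ _, (1 + x) / (2 * x) ∂m :=
        integral_mono_ae hint (integrable_const _) hhi
      _ = (1 + x) / (2 * x) := hconst _
end

section
/- Let μ be a probability measure on a finite set, and for q ∈ [1,2) define Var_q(f) = ‖f‖_2² − ‖f‖_q² for nonnegative f, where ‖f‖_r = (∫ f^r dμ)^{1/r}. Then the map q ↦ Var_q(f)/(1/q − 1/2) is monotone increasing on [1,2). -/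
/-!
Put `φ t = ‖f‖_{1/t}²`. Hölder's inequality makes `t ↦ ‖f‖_{1/t}` log-convex on `t > 0`
(Lyapunov's inequality), so `φ` is log-convex and hence convex by the weighted AM-GM inequality.
The quotient in the theorem is minus the slope of `φ` between `1/2` and `1/q`, and the slopes of
a convex function from a fixed point increase with the other endpoint.
-/

open Real Finset Set

section

variable {ι : Type*} [Fintype ι]

noncomputable def weightedMoment (w f : ι → ℝ) (p : ℝ) : ℝ := ∑ i, w i * f i ^ p

/-- `‖f‖_p` for the measure with point masses `w i`. -/
noncomputable def weightedLpNorm (w f : ι → ℝ) (p : ℝ) : ℝ := weightedMoment w f p ^ (1 / p)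

variable {w f : ι → ℝ}

lemma weightedMoment_nonneg (hw : ∀ i, 0 ≤ w i) (hf : ∀ i, 0 ≤ f i) (p : ℝ) :
    0 ≤ weightedMoment w f p :=
  sum_nonneg fun i _ => mul_nonneg (hw i) (rpow_nonneg (hf i) p)

lemma rpow_mul_rpow_mul_rpow_inv {x y c : ℝ} (hx : 0 ≤ x) (hy : 0 ≤ y) (hc : c ≠ 0) (p : ℝ) :
    (x ^ c * y ^ (c * p)) ^ c⁻¹ = x * y ^ p := by
  rw [mul_rpow (rpow_nonneg hx c) (rpow_nonneg hy _), ← rpow_mul hx, ← rpow_mul hy,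
    mul_inv_cancel₀ hc, rpow_one, mul_comm c, mul_assoc, mul_inv_cancel₀ hc, mul_one]

/-- Hölder's inequality for the exponents `1/a` and `1/b`, applied to `w^a f^(a p)` and
`w^b f^(b q)`. -/
lemma weightedMoment_add_le (hw : ∀ i, 0 ≤ w i) (hf : ∀ i, 0 ≤ f i) {a b p q : ℝ}
    (ha : 0 < a) (hb : 0 < b) (hab : a + b = 1) (hpq : a * p + b * q ≠ 0) :
    weightedMoment w f (a * p + b * q) ≤ weightedMoment w f p ^ a * weightedMoment w f q ^ b := by
  have holder := inner_le_Lp_mul_Lq_of_nonneg univ (HolderConjugate.inv_inv ha hb hab)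
    (f := fun i => w i ^ a * f i ^ (a * p)) (g := fun i => w i ^ b * f i ^ (b * q))
    (fun i _ => by have := hw i; have := hf i; positivity)
    (fun i _ => by have := hw i; have := hf i; positivity)
  have hprod : ∀ i, (w i ^ a * f i ^ (a * p)) * (w i ^ b * f i ^ (b * q))
      = w i * f i ^ (a * p + b * q) := fun i => by
    rw [mul_mul_mul_comm, ← rpow_add' (hw i) (by positivity), ← rpow_add' (hf i) hpq, hab,
      rpow_one]
  simp only [hprod, rpow_mul_rpow_mul_rpow_inv (hw _) (hf _) ha.ne',
    rpow_mul_rpow_mul_rpow_inv (hw _) (hf _) hb.ne', one_div, inv_inv] at holder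
  exact holder

lemma weightedLpNorm_inv_add_le (hw : ∀ i, 0 ≤ w i) (hf : ∀ i, 0 ≤ f i) {a b s t : ℝ}
    (ha : 0 < a) (hb : 0 < b) (hab : a + b = 1) (hs : 0 < s) (ht : 0 < t) :
    weightedLpNorm w f (a * s + b * t)⁻¹ ≤
      weightedLpNorm w f s⁻¹ ^ a * weightedLpNorm w f t⁻¹ ^ b := by
  set u := a * s + b * t
  have hu : 0 < u := by positivity
  have hM := fun p => weightedMoment_nonneg hw hf p
  -- `1/u` is the convex combination of `1/s` and `1/t` with weights `a s / u` and `b t / u`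
  have hinterp := weightedMoment_add_le hw hf (p := s⁻¹) (q := t⁻¹)
    (a := a * s / u) (b := b * t / u) (by positivity) (by positivity)
    (by rw [← add_div, div_self hu.ne']) (by positivity)
  have hexp : a * s / u * s⁻¹ + b * t / u * t⁻¹ = u⁻¹ := by
    field_simp; rw [← hab]
  rw [hexp] at hinterp
  calc weightedMoment w f u⁻¹ ^ (1 / u⁻¹)
      ≤ (weightedMoment w f s⁻¹ ^ (a * s / u) * weightedMoment w f t⁻¹ ^ (b * t / u)) ^ u := by
        rw [one_div, inv_inv]; exact rpow_le_rpow (hM _) hinterp hu.le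
    _ = (weightedMoment w f s⁻¹ ^ (1 / s⁻¹)) ^ a * (weightedMoment w f t⁻¹ ^ (1 / t⁻¹)) ^ b := by
        rw [mul_rpow (rpow_nonneg (hM _) _) (rpow_nonneg (hM _) _), ← rpow_mul (hM _),
          ← rpow_mul (hM _), ← rpow_mul (hM _), ← rpow_mul (hM _)]
        congr 2 <;> field_simp

lemma convexOn_pow_of_le_rpow_mul_rpow {E : Type*} [AddCommMonoid E] [Module ℝ E] {s : Set E}
    {g : E → ℝ} (hs : Convex ℝ s) (hg : ∀ x ∈ s, 0 ≤ g x)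
    (hlog : ∀ x ∈ s, ∀ y ∈ s, ∀ a b : ℝ, 0 < a → 0 < b → a + b = 1 →
      g (a • x + b • y) ≤ g x ^ a * g y ^ b) (n : ℕ) :
    ConvexOn ℝ s fun x => g x ^ n := by
  refine convexOn_iff_forall_pos.2 ⟨hs, fun x hx y hy a b ha hb hab => ?_⟩
  calc g (a • x + b • y) ^ n
      ≤ (g x ^ a * g y ^ b) ^ n := pow_le_pow_left₀ (hg _ (hs hx hy ha.le hb.le hab))
        (hlog x hx y hy a b ha hb hab) n
    _ = (g x ^ n) ^ a * (g y ^ n) ^ b := by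
        rw [mul_pow, rpow_pow_comm (hg x hx), rpow_pow_comm (hg y hy)]
    _ ≤ a • g x ^ n + b • g y ^ n :=
        geom_mean_le_arith_mean2_weighted ha.le hb.le (pow_nonneg (hg x hx) n)
          (pow_nonneg (hg y hy) n) hab

lemma convexOn_weightedLpNorm_inv_pow (hw : ∀ i, 0 ≤ w i) (hf : ∀ i, 0 ≤ f i) (n : ℕ) :
    ConvexOn ℝ (Ioi 0) fun t => weightedLpNorm w f t⁻¹ ^ n :=
  convexOn_pow_of_le_rpow_mul_rpow (convex_Ioi 0)
    (fun _ _ => rpow_nonneg (weightedMoment_nonneg hw hf _) _)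
    (fun _ hs _ ht _ _ ha hb hab => weightedLpNorm_inv_add_le hw hf ha hb hab hs ht) n

end

theorem stmt8_general {ι : Type*} [Fintype ι] (w f : ι → ℝ) (hw : ∀ i, 0 ≤ w i)
    (hf : ∀ i, 0 ≤ f i)
    (N : ℝ → ℝ) (hN : ∀ r : ℝ, N r = (∑ i, w i * f i ^ r) ^ (1 / r))
    (q q' : ℝ) (hq : 1 ≤ q) (hqq : q ≤ q') (hq' : q' < 2) :
    ((N 2) ^ 2 - (N q) ^ 2) / (1 / q - 1 / 2) ≤
      ((N 2) ^ 2 - (N q') ^ 2) / (1 / q' - 1 / 2) := by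
  set φ : ℝ → ℝ := fun t => weightedLpNorm w f t⁻¹ ^ 2
  have hNφ : ∀ r, N r ^ 2 = φ (1 / r) := fun r => by
    simp only [φ, show N = weightedLpNorm w f from funext hN, one_div r, inv_inv]
  have hq₀ : 0 < q := by linarith
  have hq'_inv : 1 / 2 < 1 / q' := one_div_lt_one_div_of_lt (hq₀.trans_le hqq) hq'
  have hq_inv : 1 / q' ≤ 1 / q := one_div_le_one_div_of_le hq₀ hqq
  have hslope := (convexOn_weightedLpNorm_inv_pow hw hf 2).secant_mono (a := 1 / 2)
    (mem_Ioi.2 one_half_pos) (mem_Ioi.2 (one_half_pos.trans hq'_inv))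
    (mem_Ioi.2 (one_half_pos.trans_le (hq'_inv.le.trans hq_inv)))
    hq'_inv.ne' (hq'_inv.trans_le hq_inv).ne' hq_inv
  rw [hNφ, hNφ, hNφ, ← neg_sub (φ (1 / q)), ← neg_sub (φ (1 / q')), neg_div, neg_div]
  exact neg_le_neg hslope

theorem stmt8 {ι : Type*} [Fintype ι] (w f : ι → ℝ) (hw : ∀ i, 0 ≤ w i)
    (hw1 : ∑ i, w i = 1) (hf : ∀ i, 0 ≤ f i)
    (N : ℝ → ℝ) (hN : ∀ r : ℝ, N r = (∑ i, w i * f i ^ r) ^ (1 / r))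
    (q q' : ℝ) (hq : 1 ≤ q) (hqq : q ≤ q') (hq' : q' < 2) :
    ((N 2) ^ 2 - (N q) ^ 2) / (1 / q - 1 / 2) ≤
      ((N 2) ^ 2 - (N q') ^ 2) / (1 / q' - 1 / 2) :=
  stmt8_general w f hw hf N hN q q' hq hqq hq'
end

section
/- For p ∈ (1,2], the function C_p = (sin((p−1)π)/π) ∫₀^∞ 2 s^{p−2}/(1+2s) ds satisfies (2/3)(1/(p−1) + 1/(2−p)) ≤ ∫₀^∞ 2 s^{p−2}/(1+2s) ds ≤ 2/(p−1) + 1/(2−p); in particular C_p is bounded below by a positive constant uniformly in p ∈ (1,2). -/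
open MeasureTheory Set

theorem stmt10 (p : ℝ) (hp1 : 1 < p) (hp2 : p < 2) :
    2 / 3 * (1 / (p - 1) + 1 / (2 - p)) ≤
      (∫ s in Set.Ioi (0 : ℝ), 2 * s ^ (p - 2) / (1 + 2 * s)) ∧
    (∫ s in Set.Ioi (0 : ℝ), 2 * s ^ (p - 2) / (1 + 2 * s)) ≤
      2 / (p - 1) + 1 / (2 - p) := by
  have hp1' : (0:ℝ) < p - 1 := by linarith
  have hp2' : (0:ℝ) < 2 - p := by linarith
  set f : ℝ → ℝ := fun s => 2 * s ^ (p - 2) / (1 + 2 * s) with hf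
  have hfc : ContinuousOn f (Ioi 0) := by
    apply ContinuousOn.div
    · exact continuousOn_const.mul
        (continuousOn_id.rpow_const (fun x hx => Or.inl (ne_of_gt hx)))
    · exact (continuous_const.add (continuous_const.mul continuous_id)).continuousOn
    · intro x hx
      have : (0:ℝ) < x := hx
      positivity
  -- integrability on Ioc 0 1
  have hg1 : IntegrableOn (fun s : ℝ => 2 * s ^ (p - 2)) (Ioc 0 1) := by
    have : IntervalIntegrable (fun s : ℝ => s ^ (p - 2)) volume 0 1 :=
      intervalIntegral.intervalIntegrable_rpow' (by linarith)
    rw [intervalIntegrable_iff_integrableOn_Ioc_of_le zero_le_one] at this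
    exact this.const_mul 2
  have hbound1 : ∀ s ∈ Ioc (0:ℝ) 1, f s ≤ 2 * s ^ (p - 2) := by
    intro s hs
    have hs0 : (0:ℝ) ≤ s := le_of_lt hs.1
    have h1 : (1:ℝ) ≤ 1 + 2 * s := by linarith
    have h2 : 0 ≤ 2 * s ^ (p - 2) := by positivity
    exact div_le_self h2 h1
  have hfnonneg : ∀ s ∈ Ioi (0:ℝ), 0 ≤ f s := by
    intro s hs
    have hs0 : (0:ℝ) < s := mem_Ioi.mp hs
    have : (0:ℝ) < 1 + 2 * s := by linarith
    positivity
  have hf1 : IntegrableOn f (Ioc 0 1) := by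
    apply Integrable.mono' hg1 ((hfc.mono Ioc_subset_Ioi_self).aestronglyMeasurable measurableSet_Ioc)
    filter_upwards [ae_restrict_mem measurableSet_Ioc] with s hs
    rw [Real.norm_eq_abs, abs_of_nonneg (hfnonneg s (mem_Ioi.mpr hs.1))]
    exact hbound1 s hs
  -- integrability on Ioi 1
  have hg2 : IntegrableOn (fun s : ℝ => s ^ (p - 3)) (Ioi 1) :=
    integrableOn_Ioi_rpow_of_lt (by linarith) one_pos
  have hbound2 : ∀ s ∈ Ioi (1:ℝ), f s ≤ s ^ (p - 3) := by
    intro s hs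
    have hs1 : (1:ℝ) < s := hs
    have hs0 : (0:ℝ) < s := by linarith
    have key : s ^ (p - 3) = 2 * s ^ (p - 2) / (2 * s) := by
      rw [show p - 3 = p - 2 - 1 by ring, Real.rpow_sub hs0, Real.rpow_one]
      field_simp
    rw [key]
    apply div_le_div_of_nonneg_left (by positivity) (by positivity)
    linarith
  have hf2 : IntegrableOn f (Ioi 1) := by
    apply Integrable.mono' hg2 ((hfc.mono (Ioi_subset_Ioi zero_le_one)).aestronglyMeasurable measurableSet_Ioi)
    filter_upwards [ae_restrict_mem measurableSet_Ioi] with s hs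
    rw [Real.norm_eq_abs, abs_of_nonneg (hfnonneg s (mem_Ioi.mpr (by linarith [mem_Ioi.mp hs])))]
    exact hbound2 s hs
  -- split the integral
  have hsplit : (∫ s in Ioi (0:ℝ), f s) = (∫ s in Ioc (0:ℝ) 1, f s) + ∫ s in Ioi (1:ℝ), f s := by
    rw [← setIntegral_union (Ioc_disjoint_Ioi le_rfl) measurableSet_Ioi hf1 hf2,
      Ioc_union_Ioi_eq_Ioi zero_le_one]
  -- explicit values of comparison integrals
  have hI1 : (∫ s in Ioc (0:ℝ) 1, s ^ (p - 2)) = 1 / (p - 1) := by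
    rw [← intervalIntegral.integral_of_le zero_le_one,
      integral_rpow (Or.inl (by linarith))]
    rw [Real.one_rpow, Real.zero_rpow (by linarith : p - 2 + 1 ≠ 0)]
    ring_nf
  have hI2 : (∫ s in Ioi (1:ℝ), s ^ (p - 3)) = 1 / (2 - p) := by
    rw [integral_Ioi_rpow_of_lt (by linarith) one_pos, Real.one_rpow]
    have h2p : (2:ℝ) - p ≠ 0 := ne_of_gt hp2'
    rw [show p - 3 + 1 = -(2 - p) by ring, div_neg, neg_div, neg_neg]
  constructor
  · -- lower bound
    have hl1 : (2/3) * (1 / (p - 1)) ≤ ∫ s in Ioc (0:ℝ) 1, f s := by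
      rw [← hI1, ← integral_const_mul]
      have hg1' : IntegrableOn (fun s : ℝ => 2/3 * s ^ (p - 2)) (Ioc 0 1) := by
        have : IntervalIntegrable (fun s : ℝ => s ^ (p - 2)) volume 0 1 :=
          intervalIntegral.intervalIntegrable_rpow' (by linarith)
        rw [intervalIntegrable_iff_integrableOn_Ioc_of_le zero_le_one] at this
        exact this.const_mul _
      apply setIntegral_mono_on hg1' hf1 measurableSet_Ioc
      intro s hs
      have hs0 : (0:ℝ) < s := hs.1
      have h3 : 1 + 2 * s ≤ 3 := by linarith [hs.2]
      have h2 : 0 ≤ 2 * s ^ (p - 2) := by positivity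
      calc (2/3) * s ^ (p - 2) = 2 * s ^ (p - 2) / 3 := by ring
        _ ≤ 2 * s ^ (p - 2) / (1 + 2 * s) :=
            div_le_div_of_nonneg_left h2 (by linarith) h3
    have hl2 : (2/3) * (1 / (2 - p)) ≤ ∫ s in Ioi (1:ℝ), f s := by
      rw [← hI2, ← integral_const_mul]
      apply setIntegral_mono_on (hg2.const_mul (2/3)) hf2 measurableSet_Ioi
      intro s hs
      have hs1 : (1:ℝ) < s := hs
      have hs0 : (0:ℝ) < s := by linarith
      have key : (2/3) * s ^ (p - 3) = 2 * s ^ (p - 2) / (3 * s) := by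
        rw [show p - 3 = p - 2 - 1 by ring, Real.rpow_sub hs0, Real.rpow_one]
        field_simp
      rw [key]
      apply div_le_div_of_nonneg_left (by positivity) (by positivity)
      linarith
    have : 2 / 3 * (1 / (p - 1) + 1 / (2 - p))
        = (2/3) * (1 / (p - 1)) + (2/3) * (1 / (2 - p)) := by ring
    rw [this, hsplit]
    exact add_le_add hl1 hl2
  · -- upper bound
    have hu1 : (∫ s in Ioc (0:ℝ) 1, f s) ≤ 2 / (p - 1) := by
      have : (∫ s in Ioc (0:ℝ) 1, 2 * s ^ (p - 2)) = 2 / (p - 1) := by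
        rw [integral_const_mul, hI1]; ring
      rw [← this]
      exact setIntegral_mono_on hf1 hg1 measurableSet_Ioc hbound1
    have hu2 : (∫ s in Ioi (1:ℝ), f s) ≤ 1 / (2 - p) := by
      rw [← hI2]
      exact setIntegral_mono_on hf2 hg2 measurableSet_Ioi hbound2
    rw [hsplit]
    exact add_le_add hu1 hu2
end

section
/- Let σ be a positive definite d×d density matrix and X a positive semidefinite d×d matrix, and let p ∈ (1,2]. Then tr(σ^{1/p} (σ^{1/(2p)} X σ^{1/(2p)})^{p−1}) ≤ (tr(σ^{1/2} X σ^{1/2}))^{p−1}. -/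
/-!
Diagonalise `σ = ∑ λᵢ |bᵢ⟩⟨bᵢ|` and put `xᵢ = ⟨bᵢ, X bᵢ⟩`. With `A = σ^{1/(2p)} X σ^{1/(2p)}` the
left-hand side is `∑ λᵢ^{1/p} ⟨bᵢ, A^{p-1} bᵢ⟩`. As `t ↦ t^{p-1}` is concave for `p ≤ 2`, Jensen's
inequality for the spectral measure of `A` in the unit vector `bᵢ` gives
`⟨bᵢ, A^{p-1} bᵢ⟩ ≤ ⟨bᵢ, A bᵢ⟩^{p-1} = (λᵢ^{1/p} xᵢ)^{p-1}`, so the left-hand side is at most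
`∑ λᵢ xᵢ^{p-1}`. Jensen's inequality once more, now for the probability weights `λᵢ`, bounds this
by `(∑ λᵢ xᵢ)^{p-1}`, which is the right-hand side.
-/

open scoped ComplexOrder

/-- Real power of a matrix via the continuous functional calculus. -/
noncomputable def mrpow {d : ℕ} (A : Matrix (Fin d) (Fin d) ℂ) (r : ℝ) :
    Matrix (Fin d) (Fin d) ℂ :=
  cfc (fun x : ℝ => x ^ r) A

open Matrix

lemma Matrix.conjTranspose_cfc {n 𝕜 : Type*} [RCLike 𝕜] [Fintype n] [DecidableEq n]
    (f : ℝ → ℝ) (A : Matrix n n 𝕜) : (cfc f A)ᴴ = cfc f A :=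
  cfc_predicate f A

namespace Matrix.IsHermitian

variable {n 𝕜 : Type*} [RCLike 𝕜] [Fintype n] [DecidableEq n] {A : Matrix n n 𝕜}
  (hA : A.IsHermitian)
include hA

lemma star_eigenvectorBasis_dotProduct_self (j : n) :
    star ⇑(hA.eigenvectorBasis j) ⬝ᵥ ⇑(hA.eigenvectorBasis j) = 1 := by
  rw [dotProduct_comm, ← EuclideanSpace.inner_eq_star_dotProduct, inner_self_eq_norm_sq_to_K,
    hA.eigenvectorBasis.orthonormal.1 j, RCLike.ofReal_one, one_pow]

lemma cfc_mulVec_eigenvectorBasis (f : ℝ → ℝ) (j : n) :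
    cfc f A *ᵥ ⇑(hA.eigenvectorBasis j) =
      (f (hA.eigenvalues j) : 𝕜) • ⇑(hA.eigenvectorBasis j) := by
  rw [hA.cfc_eq, IsHermitian.cfc, Unitary.conjStarAlgAut_apply, ← mulVec_mulVec, ← mulVec_mulVec,
    star_eigenvectorUnitary_mulVec, diagonal_mulVec_single, ← smul_eq_mul, Pi.single_smul',
    mulVec_smul, eigenvectorUnitary_mulVec]
  rfl

lemma star_eigenvectorBasis_vecMul_cfc (f : ℝ → ℝ) (j : n) :
    star ⇑(hA.eigenvectorBasis j) ᵥ* cfc f A =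
      (f (hA.eigenvalues j) : 𝕜) • star ⇑(hA.eigenvectorBasis j) := by
  rw [← conjTranspose_cfc, ← star_mulVec, hA.cfc_mulVec_eigenvectorBasis, star_smul,
    RCLike.star_def, RCLike.conj_ofReal]

lemma trace_eq_sum_dotProduct_eigenvectorBasis (B : Matrix n n 𝕜) :
    B.trace = ∑ j, star ⇑(hA.eigenvectorBasis j) ⬝ᵥ B *ᵥ ⇑(hA.eigenvectorBasis j) := by
  set U : Matrix n n 𝕜 := (hA.eigenvectorUnitary : Matrix n n 𝕜)
  have hU : U * star U = 1 := Unitary.coe_mul_star_self hA.eigenvectorUnitary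
  calc B.trace = (star U * B * U).trace := by rw [trace_mul_cycle, hU, one_mul]
    _ = _ := by
      refine Finset.sum_congr rfl fun j _ => ?_
      simp [U, Matrix.mul_apply, dotProduct, mulVec, Finset.mul_sum, mul_assoc]

lemma trace_cfc_mul (f : ℝ → ℝ) (B : Matrix n n 𝕜) :
    (cfc f A * B).trace = ∑ j, (f (hA.eigenvalues j) : 𝕜) *
      (star ⇑(hA.eigenvectorBasis j) ⬝ᵥ B *ᵥ ⇑(hA.eigenvectorBasis j)) := by
  rw [hA.trace_eq_sum_dotProduct_eigenvectorBasis]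
  refine Finset.sum_congr rfl fun j _ => ?_
  rw [← mulVec_mulVec, dotProduct_mulVec, hA.star_eigenvectorBasis_vecMul_cfc, smul_dotProduct,
    smul_eq_mul]

lemma dotProduct_cfc_mul_mul_cfc_mulVec_eigenvectorBasis (f g : ℝ → ℝ) (B : Matrix n n 𝕜)
    (j : n) :
    star ⇑(hA.eigenvectorBasis j) ⬝ᵥ (cfc f A * B * cfc g A) *ᵥ ⇑(hA.eigenvectorBasis j) =
      (f (hA.eigenvalues j) * g (hA.eigenvalues j) : ℝ) *
        (star ⇑(hA.eigenvectorBasis j) ⬝ᵥ B *ᵥ ⇑(hA.eigenvectorBasis j)) := by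
  rw [← mulVec_mulVec, hA.cfc_mulVec_eigenvectorBasis, ← mulVec_mulVec, dotProduct_mulVec,
    hA.star_eigenvectorBasis_vecMul_cfc, mulVec_smul, dotProduct_smul, smul_dotProduct]
  simp only [smul_eq_mul, RCLike.ofReal_mul]
  ring

lemma dotProduct_cfc_mulVec (f : ℝ → ℝ) (u : n → 𝕜) :
    star u ⬝ᵥ cfc f A *ᵥ u =
      ∑ j, (f (hA.eigenvalues j) : 𝕜) * ‖star ⇑(hA.eigenvectorBasis j) ⬝ᵥ u‖ ^ 2 := by
  set U : Matrix n n 𝕜 := (hA.eigenvectorUnitary : Matrix n n 𝕜)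
  have hc : ∀ j, (star U *ᵥ u) j = star ⇑(hA.eigenvectorBasis j) ⬝ᵥ u := fun j => by
    simp [U, mulVec, dotProduct]
  have hstar : star u ᵥ* U = star (star U *ᵥ u) := by
    rw [star_mulVec, star_eq_conjTranspose, conjTranspose_conjTranspose]
  rw [hA.cfc_eq, IsHermitian.cfc, Unitary.conjStarAlgAut_apply, ← mulVec_mulVec,
    dotProduct_mulVec, ← vecMul_vecMul, hstar, ← dotProduct_mulVec, dotProduct]
  refine Finset.sum_congr rfl fun j _ => ?_
  rw [mulVec_diagonal, Pi.star_apply, hc, RCLike.star_def, mul_left_comm, RCLike.conj_mul]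
  rfl

end Matrix.IsHermitian

lemma Matrix.PosSemidef.re_dotProduct_cfc_mulVec_le {n 𝕜 : Type*} [RCLike 𝕜] [Fintype n]
    [DecidableEq n] {A : Matrix n n 𝕜} (hA : A.PosSemidef) {f : ℝ → ℝ}
    (hf : ConcaveOn ℝ (Set.Ici 0) f) {u : n → 𝕜} (hu : star u ⬝ᵥ u = 1) :
    RCLike.re (star u ⬝ᵥ cfc f A *ᵥ u) ≤ f (RCLike.re (star u ⬝ᵥ A *ᵥ u)) := by
  have hre : ∀ g : ℝ → ℝ, RCLike.re (star u ⬝ᵥ cfc g A *ᵥ u) =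
      ∑ j, ‖star ⇑(hA.1.eigenvectorBasis j) ⬝ᵥ u‖ ^ 2 • g (hA.1.eigenvalues j) := fun g => by
    rw [hA.1.dotProduct_cfc_mulVec, map_sum]
    refine Finset.sum_congr rfl fun j _ => ?_
    rw [← RCLike.ofReal_pow, ← RCLike.ofReal_mul, RCLike.ofReal_re, smul_eq_mul, mul_comm]
  have hw : ∑ j, ‖star ⇑(hA.1.eigenvectorBasis j) ⬝ᵥ u‖ ^ 2 = 1 := by
    have h1 := hre fun _ => 1
    rw [cfc_const_one ℝ A hA.1.isSelfAdjoint, one_mulVec, hu, RCLike.one_re] at h1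
    simpa only [smul_eq_mul, mul_one] using h1.symm
  conv_rhs => rw [← cfc_id' ℝ A hA.1.isSelfAdjoint, hre]
  rw [hre]
  exact hf.le_map_sum (fun j _ => by positivity) hw fun j _ => hA.eigenvalues_nonneg j

lemma Matrix.PosSemidef.cfc_mul_mul_cfc {n 𝕜 : Type*} [RCLike 𝕜] [Fintype n] [DecidableEq n]
    {X : Matrix n n 𝕜} (hX : X.PosSemidef) (f : ℝ → ℝ) (A : Matrix n n 𝕜) :
    (cfc f A * X * cfc f A).PosSemidef := by
  simpa only [conjTranspose_cfc] using hX.conjTranspose_mul_mul_same (cfc f A)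

lemma Real.rpow_one_div_mul_mul_rpow_sub_one {a x p : ℝ} (ha : 0 < a) (hx : 0 ≤ x) (hp : 0 < p) :
    a ^ (1 / p) * (a ^ (1 / p) * x) ^ (p - 1) = a * x ^ (p - 1) := by
  rw [Real.mul_rpow (by positivity) hx, ← Real.rpow_mul ha.le, ← mul_assoc, ← Real.rpow_add ha,
    show 1 / p + 1 / p * (p - 1) = 1 by field_simp; ring, Real.rpow_one]

theorem Matrix.PosDef.re_trace_rpow_mul_rpow_conj_le {n 𝕜 : Type*} [RCLike 𝕜] [Fintype n]
    [DecidableEq n] {σ X : Matrix n n 𝕜} (hσ : σ.PosDef) (hσtr : σ.trace = 1)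
    (hX : X.PosSemidef) {p : ℝ} (hp1 : 1 < p) (hp2 : p ≤ 2) :
    RCLike.re (cfc (fun t : ℝ => t ^ (1 / p)) σ * cfc (fun t : ℝ => t ^ (p - 1))
        (cfc (fun t : ℝ => t ^ (1 / (2 * p))) σ * X *
          cfc (fun t : ℝ => t ^ (1 / (2 * p))) σ)).trace ≤
      RCLike.re (cfc (fun t : ℝ => t ^ (1 / 2 : ℝ)) σ * X *
        cfc (fun t : ℝ => t ^ (1 / 2 : ℝ)) σ).trace ^ (p - 1) := by
  have hH : σ.IsHermitian := hσ.1
  let x i := RCLike.re (star ⇑(hH.eigenvectorBasis i) ⬝ᵥ X *ᵥ ⇑(hH.eigenvectorBasis i))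
  have hlam : ∀ i, 0 < hH.eigenvalues i := hσ.eigenvalues_pos
  have hx : ∀ i, 0 ≤ x i := fun i => hX.re_dotProduct_nonneg _
  have hlam_sum : ∑ i, hH.eigenvalues i = 1 := by
    exact_mod_cast hσtr ▸ hH.trace_eq_sum_eigenvalues.symm
  have hconj : ∀ (s : ℝ) i, RCLike.re (star ⇑(hH.eigenvectorBasis i) ⬝ᵥ
      (cfc (fun t : ℝ => t ^ (s / 2)) σ * X * cfc (fun t : ℝ => t ^ (s / 2)) σ) *ᵥ
        ⇑(hH.eigenvectorBasis i)) = hH.eigenvalues i ^ s * x i := by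
    intro s i
    rw [hH.dotProduct_cfc_mul_mul_cfc_mulVec_eigenvectorBasis, RCLike.re_ofReal_mul,
      ← Real.rpow_add (hlam i), add_halves]
  have hr : ConcaveOn ℝ (Set.Ici 0) fun t : ℝ => t ^ (p - 1) :=
    Real.concaveOn_rpow (by linarith) (by linarith)
  rw [show 1 / (2 * p) = 1 / p / 2 by ring, hH.trace_cfc_mul, map_sum,
    hH.trace_eq_sum_dotProduct_eigenvectorBasis, map_sum]
  simp only [RCLike.re_ofReal_mul, hconj 1, Real.rpow_one]
  calc _ ≤ ∑ i, hH.eigenvalues i ^ (1 / p) * (hH.eigenvalues i ^ (1 / p) * x i) ^ (p - 1) := by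
        refine Finset.sum_le_sum fun i _ =>
          mul_le_mul_of_nonneg_left ?_ (Real.rpow_nonneg (hlam i).le _)
        rw [← hconj]
        exact (hX.cfc_mul_mul_cfc _ σ).re_dotProduct_cfc_mulVec_le hr
          (hH.star_eigenvectorBasis_dotProduct_self i)
    _ = ∑ i, hH.eigenvalues i * x i ^ (p - 1) := by
        simp only [Real.rpow_one_div_mul_mul_rpow_sub_one (hlam _) (hx _) (by linarith : 0 < p)]
    _ ≤ (∑ i, hH.eigenvalues i * x i) ^ (p - 1) := by
        simpa using hr.le_map_sum (fun i _ => (hlam i).le) hlam_sum (fun i _ => hx i)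

theorem stmt12 {d : ℕ} (σ X : Matrix (Fin d) (Fin d) ℂ)
    (hσ : σ.PosDef) (hσtr : Matrix.trace σ = 1) (hX : X.PosSemidef)
    (p : ℝ) (hp1 : 1 < p) (hp2 : p ≤ 2) :
    (Matrix.trace (mrpow σ (1 / p) *
        mrpow (mrpow σ (1 / (2 * p)) * X * mrpow σ (1 / (2 * p))) (p - 1))).re ≤
      ((Matrix.trace (mrpow σ (1 / 2) * X * mrpow σ (1 / 2))).re) ^ (p - 1) :=
  Matrix.PosDef.re_trace_rpow_mul_rpow_conj_le hσ hσtr hX hp1 hp2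
end

section
/- For p ∈ (1,2] and all x, y > 0 with x ≠ y, ∂_x θ_p(x,y) + ∂_y θ_p(x,y) ≥ 0, where θ_p(x,y) = (p−1)(x−y)/(x^{p−1} − y^{p−1}). -/
/-- The mean `θ_p`, the reciprocal of the divided difference of `f_p x = x^(p-1)/(p-1)`. -/
noncomputable def thetaP (p x y : ℝ) : ℝ :=
  if x = y then x ^ (2 - p) else (p - 1) * (x - y) / (x ^ (p - 1) - y ^ (p - 1))

/-!
Off the diagonal, `θ_p(x, y) = (x - y) / (f x - f y)` with `f t = t ^ (p - 1) / (p - 1)`.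
For any differentiable `f`, the two partial derivatives of `(x - y) / (f x - f y)` add up to
`(x - y) (f' y - f' x) / (f x - f y) ^ 2`, which is nonnegative as soon as `f'` is antitone,
i.e. `f` is concave. For `p ∈ (1, 2]` the derivative `f' t = t ^ (p - 2)` is antitone on `(0, ∞)`.
-/

open Set

section DividedDifference

variable {f f' : ℝ → ℝ} {x y : ℝ}

theorem hasDerivAt_sub_div_sub_left (hf : HasDerivAt f (f' x) x) (hfxy : f x ≠ f y) :
    HasDerivAt (fun x' => (x' - y) / (f x' - f y))
      ((f x - f y - (x - y) * f' x) / (f x - f y) ^ 2) x :=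
  (((hasDerivAt_id' x).sub_const y).fun_div (hf.sub_const (f y)) (sub_ne_zero.2 hfxy)).congr_deriv
    (by ring)

theorem hasDerivAt_sub_div_sub_right (hf : HasDerivAt f (f' y) y) (hfxy : f x ≠ f y) :
    HasDerivAt (fun y' => (x - y') / (f x - f y'))
      ((-(f x - f y) + (x - y) * f' y) / (f x - f y) ^ 2) y :=
  (((hasDerivAt_id' y).const_sub x).fun_div (hf.const_sub (f x)) (sub_ne_zero.2 hfxy)).congr_deriv
    (by ring)

theorem deriv_sub_div_sub_add_deriv (hfx : HasDerivAt f (f' x) x) (hfy : HasDerivAt f (f' y) y)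
    (hfxy : f x ≠ f y) :
    deriv (fun x' => (x' - y) / (f x' - f y)) x + deriv (fun y' => (x - y') / (f x - f y')) y =
      (x - y) * (f' y - f' x) / (f x - f y) ^ 2 := by
  rw [(hasDerivAt_sub_div_sub_left hfx hfxy).deriv, (hasDerivAt_sub_div_sub_right hfy hfxy).deriv]
  ring

end DividedDifference

theorem AntitoneOn.sub_mul_sub_nonneg {g : ℝ → ℝ} {s : Set ℝ} (hg : AntitoneOn g s) {x y : ℝ}
    (hx : x ∈ s) (hy : y ∈ s) : 0 ≤ (x - y) * (g y - g x) := by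
  rcases le_total x y with hxy | hyx
  · exact mul_nonneg_of_nonpos_of_nonpos (sub_nonpos.2 hxy) (sub_nonpos.2 (hg hx hy hxy))
  · exact mul_nonneg (sub_nonneg.2 hyx) (sub_nonneg.2 (hg hy hx hyx))

-- `(p - 1) * a / b = a / (b / (p - 1))` holds even for `p = 1`, as both sides are then `0`.
theorem thetaP_of_ne {p x y : ℝ} (hxy : x ≠ y) :
    thetaP p x y = (x - y) / (x ^ (p - 1) / (p - 1) - y ^ (p - 1) / (p - 1)) := by
  rw [thetaP, if_neg hxy, ← sub_div, div_div_eq_mul_div, mul_comm]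

theorem deriv_thetaP_add_deriv {p x y : ℝ} (hxy : x ≠ y) :
    deriv (fun x' => thetaP p x' y) x + deriv (fun y' => thetaP p x y') y =
      deriv (fun x' => (x' - y) / (x' ^ (p - 1) / (p - 1) - y ^ (p - 1) / (p - 1))) x +
        deriv (fun y' => (x - y') / (x ^ (p - 1) / (p - 1) - y' ^ (p - 1) / (p - 1))) y := by
  congr 1 <;> apply Filter.EventuallyEq.deriv_eq
  · filter_upwards [eventually_ne_nhds hxy] with x' hx' using thetaP_of_ne hx'
  · filter_upwards [eventually_ne_nhds hxy.symm] with y' hy' using thetaP_of_ne hy'.symm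

theorem hasDerivAt_rpow_div_self {q t : ℝ} (hq : q ≠ 0) (ht : 0 < t) :
    HasDerivAt (fun s => s ^ q / q) (t ^ (q - 1)) t := by
  simpa [hq] using (Real.hasDerivAt_rpow_const (p := q) (Or.inl ht.ne')).div_const q

theorem stmt16 (p x y : ℝ) (hp1 : 1 < p) (hp2 : p ≤ 2) (hx : 0 < x) (hy : 0 < y)
    (hxy : x ≠ y) :
    0 ≤ deriv (fun x' => thetaP p x' y) x + deriv (fun y' => thetaP p x y') y := by
  have hq : p - 1 ≠ 0 := sub_ne_zero.2 hp1.ne'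
  have hfxy : x ^ (p - 1) / (p - 1) ≠ y ^ (p - 1) / (p - 1) := by
    rwa [Ne, div_left_inj' hq, Real.rpow_left_inj hx.le hy.le hq]
  have hconcave : AntitoneOn (fun t : ℝ => t ^ (p - 1 - 1)) (Ioi 0) :=
    Real.antitoneOn_rpow_Ioi_of_exponent_nonpos (by linarith)
  rw [deriv_thetaP_add_deriv hxy, deriv_sub_div_sub_add_deriv (f := fun t => t ^ (p - 1) / (p - 1))
    (f' := fun t => t ^ (p - 1 - 1)) (hasDerivAt_rpow_div_self hq hx)
    (hasDerivAt_rpow_div_self hq hy) hfxy]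
  exact div_nonneg (hconcave.sub_mul_sub_nonneg hx hy) (sq_nonneg _)
end

section
/- For p ∈ (1,2] and x, y > 0 with x ≠ y, the divided difference (x^{p−1} − y^{p−1})/((p−1)(x−y)) is bounded below by (x + y)^{p−2} times the constant c_p = (sin((p−1)π)/π)∫₀^∞ 2 s^{p−2}/(1+2s) ds; that is, (x^{p−1} − y^{p−1})/((p−1)(x−y)) ≥ c_p (x + y)^{p−2}. -/
/-!
The constant is `c_p = 2 ^ (2 - p)`: substituting `s = t / (1 - t)` turns `∫ s ^ (a - 1) / (1 + s)`
into the Beta integral `B(a, 1 - a) = Γ(a) Γ(1 - a) = π / sin (π a)`. For `p = 2` it vanishes,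
as `sin π = 0`. The divided difference is the mean of the convex function `t ↦ t ^ (p - 2)` over
`[y, x]`, so by the Hermite–Hadamard inequality it dominates the value at the midpoint,
`((x + y) / 2) ^ (p - 2) = 2 ^ (2 - p) * (x + y) ^ (p - 2)`.
-/

open MeasureTheory Set Real

theorem convexOn_rpow_of_nonpos {r : ℝ} (hr : r ≤ 0) : ConvexOn ℝ (Ioi 0) fun t : ℝ ↦ t ^ r := by
  have hd : ∀ s : ℝ, DifferentiableOn ℝ (fun t : ℝ ↦ t ^ s) (Ioi 0) := fun s t ht ↦
    (hasDerivAt_rpow_const (Or.inl (ne_of_gt ht))).differentiableAt.differentiableWithinAt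
  refine convexOn_of_deriv2_nonneg' (convex_Ioi 0) (hd r) ?_ fun t ht ↦ ?_
  · rw [deriv_rpow_const']
    exact (hd (r - 1)).const_mul r
  · rw [iter_deriv_rpow_const]
    have : 0 ≤ r * (r - 1) := mul_nonneg_of_nonpos_of_nonpos hr (by linarith)
    simpa [descPochhammer_succ_right] using mul_nonneg this (rpow_nonneg (le_of_lt ht) _)

theorem ConvexOn.mul_map_midpoint_le_intervalIntegral {f : ℝ → ℝ} {a b : ℝ} (hab : a ≤ b)
    (hf : ConvexOn ℝ (Icc a b) f) (hfc : ContinuousOn f (Icc a b)) :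
    (b - a) * f ((a + b) / 2) ≤ ∫ x in a..b, f x := by
  have hmid : ∀ x ∈ Icc a b, f ((a + b) / 2) ≤ (f x + f (a + b - x)) / 2 := by
    intro x hx
    have hx' : a + b - x ∈ Icc a b := ⟨by linarith [hx.2], by linarith [hx.1]⟩
    have := hf.2 hx hx' (by norm_num : (0:ℝ) ≤ 1 / 2) (by norm_num : (0:ℝ) ≤ 1 / 2) (by norm_num)
    simp only [smul_eq_mul] at this
    rw [show (a + b) / 2 = 1 / 2 * x + 1 / 2 * (a + b - x) by ring]
    linarith
  have hi : IntervalIntegrable f volume a b :=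
    (hfc.mono (by simp [uIcc_of_le hab])).intervalIntegrable
  have hi' : IntervalIntegrable (fun x ↦ f (a + b - x)) volume a b := by
    simpa using (hi.comp_sub_left (a + b)).symm
  have hreflect : ∫ x in a..b, f (a + b - x) = ∫ x in a..b, f x := by
    simp [intervalIntegral.integral_comp_sub_left]
  calc (b - a) * f ((a + b) / 2) = ∫ _ in a..b, f ((a + b) / 2) := by simp
    _ ≤ ∫ x in a..b, (f x + f (a + b - x)) / 2 :=
      intervalIntegral.integral_mono_on hab intervalIntegrable_const
        ((hi.add hi').div_const 2) hmid
    _ = ∫ x in a..b, f x := by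
      rw [intervalIntegral.integral_div, intervalIntegral.integral_add hi hi', hreflect]
      ring

theorem avg_rpow_sub_one_le_rpow_sub_rpow_div {a x y : ℝ} (ha0 : a ≠ 0) (ha1 : a ≤ 1)
    (hx : 0 < x) (hy : 0 < y) (hxy : x ≠ y) :
    ((x + y) / 2) ^ (a - 1) ≤ (x ^ a - y ^ a) / (a * (x - y)) := by
  wlog hlt : y < x generalizing x y
  · have h := this hy hx hxy.symm (hxy.lt_or_gt.resolve_right hlt)
    rwa [add_comm, ← neg_sub x, ← neg_sub (x ^ a), mul_neg, neg_div_neg_eq] at h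
  have hpos : Icc y x ⊆ Ioi 0 := fun t ht ↦ hy.trans_le ht.1
  have hcont : ContinuousOn (fun t : ℝ ↦ t ^ (a - 1)) (Icc y x) := fun t ht ↦
    (continuousAt_id.rpow_const (Or.inl (hpos ht).ne')).continuousWithinAt
  have hHH := ((convexOn_rpow_of_nonpos (by linarith : a - 1 ≤ 0)).subset hpos
    (convex_Icc y x)).mul_map_midpoint_le_intervalIntegral hlt.le hcont
  have hzero : (0 : ℝ) ∉ uIcc y x := by
    rw [uIcc_of_le hlt.le]
    exact fun h ↦ (hy.trans_le h.1).false
  rw [integral_rpow (Or.inr ⟨by contrapose! ha0; linarith, hzero⟩), sub_add_cancel, add_comm y]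
    at hHH
  rwa [← div_div, le_div_iff₀ (sub_pos.2 hlt), mul_comm]

theorem integral_rpow_mul_one_sub_rpow_neg {a : ℝ} (ha0 : 0 < a) (ha1 : a < 1) :
    ∫ t in (0:ℝ)..1, t ^ (a - 1) * (1 - t) ^ (-a) = π / sin (π * a) := by
  have hbeta : Complex.betaIntegral a (1 - a) =
      ↑(∫ t in (0:ℝ)..1, t ^ (a - 1) * (1 - t) ^ (-a)) := by
    rw [Complex.betaIntegral, ← intervalIntegral.integral_ofReal]
    refine intervalIntegral.integral_congr fun t ht ↦ ?_
    rw [uIcc_of_le zero_le_one] at ht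
    simp only [Complex.ofReal_mul, Complex.ofReal_cpow ht.1,
      Complex.ofReal_cpow (sub_nonneg.2 ht.2)]
    push_cast
    ring_nf
  have h := Complex.Gamma_mul_Gamma_eq_betaIntegral (s := a) (t := 1 - a) (by simpa) (by simpa)
  rw [add_sub_cancel, Complex.Gamma_one, one_mul, hbeta, ← Complex.ofReal_one,
    ← Complex.ofReal_sub, Complex.Gamma_ofReal, Complex.Gamma_ofReal, ← Complex.ofReal_mul,
    Real.Gamma_mul_Gamma_one_sub] at h
  exact_mod_cast h.symm

theorem integral_Ioi_rpow_div_one_add {a : ℝ} (ha0 : 0 < a) (ha1 : a < 1) :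
    ∫ s in Ioi (0:ℝ), s ^ (a - 1) / (1 + s) = π / sin (π * a) := by
  set f : ℝ → ℝ := fun t ↦ t / (1 - t)
  have himage : f '' Ioo 0 1 = Ioi 0 := by
    ext s
    refine ⟨?_, fun hs ↦ ⟨s / (1 + s), ?_, ?_⟩⟩
    · rintro ⟨t, ⟨ht0, ht1⟩, rfl⟩
      exact div_pos ht0 (sub_pos.2 ht1)
    · have hs : 0 < s := hs
      exact ⟨by positivity, (div_lt_one (by positivity)).2 (by linarith)⟩
    · have : 1 + s ≠ 0 := by have : (0:ℝ) < s := hs; positivity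
      simp only [f]
      field_simp
      ring
  have hderiv : ∀ t ∈ Ioo (0:ℝ) 1, HasDerivWithinAt f ((1 - t) ^ 2)⁻¹ (Ioo 0 1) t := by
    intro t ht
    have h1 : 1 - t ≠ 0 := (sub_pos.2 ht.2).ne'
    refine ((hasDerivAt_id' t).div ((hasDerivAt_id' t).const_sub 1) h1).hasDerivWithinAt
      |>.congr_deriv ?_
    field_simp
    ring
  have hinj : InjOn f (Ioo 0 1) := by
    intro s hs t ht hst
    have := (sub_pos.2 hs.2).ne'
    have := (sub_pos.2 ht.2).ne'
    simp only [f] at hst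
    field_simp at hst
    linarith
  have hpt : ∀ t ∈ Ioo (0:ℝ) 1,
      |((1 - t) ^ 2)⁻¹| • (f t ^ (a - 1) / (1 + f t)) = t ^ (a - 1) * (1 - t) ^ (-a) := by
    rintro t ⟨ht0, ht1⟩
    have hb : 0 < 1 - t := sub_pos.2 ht1
    have h1 : 1 + f t = (1 - t)⁻¹ := by simp only [f]; field_simp; ring
    rw [smul_eq_mul, h1, div_rpow ht0.le hb.le, abs_of_pos (by positivity), rpow_neg hb.le,
      rpow_sub_one hb.ne']
    field_simp
  rw [← himage, integral_image_eq_integral_abs_deriv_smul measurableSet_Ioo hderiv hinj,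
    setIntegral_congr_fun measurableSet_Ioo hpt, ← integral_Ioc_eq_integral_Ioo,
    ← intervalIntegral.integral_of_le zero_le_one, integral_rpow_mul_one_sub_rpow_neg ha0 ha1]

theorem integral_Ioi_mul_rpow_div_one_add_mul {a c : ℝ} (ha0 : 0 < a) (ha1 : a < 1)
    (hc : 0 < c) :
    ∫ s in Ioi (0:ℝ), c * s ^ (a - 1) / (1 + c * s) = c ^ (1 - a) * (π / sin (π * a)) := by
  have hpt : ∀ s ∈ Ioi (0:ℝ),
      c * s ^ (a - 1) / (1 + c * s) = c ^ (2 - a) * ((c * s) ^ (a - 1) / (1 + c * s)) := by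
    intro s hs
    rw [mul_rpow hc.le (le_of_lt hs), ← mul_div_assoc, ← mul_assoc, ← rpow_add hc,
      show 2 - a + (a - 1) = 1 by ring, rpow_one]
  rw [setIntegral_congr_fun measurableSet_Ioi hpt, integral_const_mul,
    integral_comp_mul_left_Ioi (fun u ↦ u ^ (a - 1) / (1 + u)) 0 hc, mul_zero,
    integral_Ioi_rpow_div_one_add ha0 ha1, smul_eq_mul, ← mul_assoc, ← rpow_neg_one,
    ← rpow_add hc, show 2 - a + -1 = 1 - a by ring]

theorem sin_mul_pi_div_pi_mul_integral_Ioi_eq {a c : ℝ} (ha0 : 0 < a) (ha1 : a < 1)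
    (hc : 0 < c) :
    sin (a * π) / π * ∫ s in Ioi (0:ℝ), c * s ^ (a - 1) / (1 + c * s) = c ^ (1 - a) := by
  have hsin : 0 < sin (π * a) :=
    sin_pos_of_pos_of_lt_pi (by positivity) (by nlinarith [pi_pos])
  rw [integral_Ioi_mul_rpow_div_one_add_mul ha0 ha1 hc, mul_comm a π]
  field_simp

theorem stmt18 (p x y : ℝ) (hp1 : 1 < p) (hp2 : p ≤ 2) (hx : 0 < x) (hy : 0 < y)
    (hxy : x ≠ y) :
    (Real.sin ((p - 1) * Real.pi) / Real.pi *
        ∫ s in Set.Ioi (0 : ℝ), 2 * s ^ (p - 2) / (1 + 2 * s)) * (x + y) ^ (p - 2) ≤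
      (x ^ (p - 1) - y ^ (p - 1)) / ((p - 1) * (x - y)) := by
  have hconst : sin ((p - 1) * π) / π * ∫ s in Ioi (0:ℝ), 2 * s ^ (p - 2) / (1 + 2 * s)
      ≤ 2 ^ (2 - p) := by
    rcases hp2.lt_or_eq with hp2 | rfl
    · rw [show p - 2 = p - 1 - 1 by ring, show 2 - p = 1 - (p - 1) by ring,
        sin_mul_pi_div_pi_mul_integral_Ioi_eq (by linarith) (by linarith) two_pos]
    · norm_num
  calc _ ≤ 2 ^ (2 - p) * (x + y) ^ (p - 2) := by gcongr
    _ = ((x + y) / 2) ^ (p - 1 - 1) := by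
      rw [div_rpow (by positivity) zero_le_two, div_eq_mul_inv, ← rpow_neg zero_le_two]
      ring_nf
    _ ≤ _ := avg_rpow_sub_one_le_rpow_sub_rpow_div (by linarith) (by linarith) hx hy hxy
end
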